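/- arXiv:1912.00033 — 2 statements merged into one kernel-verified Lean document; each statement's English description precedes it below -/
import Mathlib

section
/- In the finite-dimensional discrete-spectrum clock setup, define for every Lebesgue-measurable set X ⊆ ℝ of finite measure the effect operator E(X) := (1/t_max) ∫_X |t⟩⟨t| dt (Bochner integral). Then the covariance condition of the clock POVM holds: for every such X and every s ∈ ℝ, U_C(s) ∘ E(X) ∘ U_C(s)⁻¹ = E(X + s), where X + s := {x + s : x ∈ X}. Moreover each E(X) is a positive operator. -/
/-!
`HC` is diagonal in `b`, so `U s` multiplies the `j`-th coordinate by `e^{-i s ε_j}` and maps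
the clock state `|t⟩` to `|t + s⟩`. As `HC` is self-adjoint, `U s` is unitary with
`star (U s) = U (-s)`, so conjugating the integrand `|t⟩⟨t|` by `U s` gives `|t + s⟩⟨t + s|`,
and translation invariance of Lebesgue measure turns the integral over `X` into one over `X + s`.
Conjugation by a unitary is a continuous linear equivalence, so it commutes with the Bochner
integral with no integrability assumption. Positivity holds because the positive operators form a
closed convex cone containing every `|t⟩⟨t|`.
-/

open MeasureTheory

noncomputable section

/-- The rank-one operator `|v⟩⟨w| : ψ ↦ ⟨w, ψ⟩ v` on a complex inner product space. -/
noncomputable def ketbra {H : Type*} [NormedAddCommGroup H] [InnerProductSpace ℂ H]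
    (v w : H) : H →L[ℂ] H :=
  (ContinuousLinearMap.toSpanSingleton ℂ v).comp (innerSL ℂ w)

open InnerProductSpace ContinuousLinearMap Complex

lemma ketbra_eq_rankOne {H : Type*} [NormedAddCommGroup H] [InnerProductSpace ℂ H] (v w : H) :
    ketbra v w = rankOne ℂ v w := rfl

lemma Orthonormal.sum_smul_rankOne_self_apply {𝕜 H ι : Type*} [RCLike 𝕜] [NormedAddCommGroup H]
    [InnerProductSpace 𝕜 H] [Fintype ι] {b : ι → H} (hb : Orthonormal 𝕜 b) (c : ι → 𝕜) (k : ι) :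
    (∑ j, c j • rankOne 𝕜 (b j) (b j)) (b k) = c k • b k := by
  classical
  simp [orthonormal_iff_ite.mp hb]

lemma isSelfAdjoint_sum_ofReal_smul_rankOne_self {H ι : Type*} [NormedAddCommGroup H]
    [InnerProductSpace ℂ H] [CompleteSpace H] [Fintype ι] (v : ι → H) (c : ι → ℝ) :
    IsSelfAdjoint (∑ j, (c j : ℂ) • rankOne ℂ (v j) (v j)) := by
  refine isSelfAdjoint_sum _ fun j _ => ?_
  exact IsSelfAdjoint.smul (by simp [IsSelfAdjoint]) (by simp [IsSelfAdjoint, star_eq_adjoint])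

lemma NormedSpace.exp_apply_of_apply_eq_smul {E : Type*} [NormedAddCommGroup E] [NormedSpace ℂ E]
    [CompleteSpace E] {A : E →L[ℂ] E} {v : E} {μ : ℂ} (h : A v = μ • v) :
    exp A v = Complex.exp μ • v := by
  have hpow : ∀ k : ℕ, (A ^ k) v = μ ^ k • v := by
    intro k
    induction k with
    | zero => simp
    | succ k ih => rw [pow_succ', mul_def, comp_apply, ih, map_smul, h, smul_smul, ← pow_succ]
  have hA := (NormedSpace.exp_series_hasSum_exp' (𝕂 := ℂ) A).mapL (apply ℂ E v)
  have hμ := (NormedSpace.exp_series_hasSum_exp' (𝕂 := ℂ) μ).smul_const v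
  rw [← Complex.exp_eq_exp_ℂ] at hμ
  refine hA.unique ?_
  convert hμ using 1
  funext k
  simp [hpow, smul_smul]

lemma star_exp_of_mem_skewAdjoint {𝔸 : Type*} [NormedRing 𝔸] [NormedAlgebra ℚ 𝔸] [CompleteSpace 𝔸]
    [StarRing 𝔸] [ContinuousStar 𝔸] {x : 𝔸} (hx : x ∈ skewAdjoint 𝔸) :
    star (NormedSpace.exp x) = NormedSpace.exp (-x) := by
  rw [NormedSpace.star_exp, skewAdjoint.mem_iff.mp hx]

lemma neg_ofReal_mul_I_mem_skewAdjoint (t : ℝ) : -(t : ℂ) * I ∈ skewAdjoint ℂ := by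
  simp [skewAdjoint.mem_iff]

lemma comp_rankOne_comp_adjoint {𝕜 H : Type*} [RCLike 𝕜] [NormedAddCommGroup H]
    [InnerProductSpace 𝕜 H] [CompleteSpace H] (A B : H →L[𝕜] H) (v w : H) :
    A ∘L rankOne 𝕜 v w ∘L adjoint B = rankOne 𝕜 (A v) (B w) := by
  rw [← comp_assoc, comp_rankOne, rankOne_comp, adjoint_adjoint]

lemma integral_unitary_comp_comp_star {α H : Type*} [MeasurableSpace α] {μ : Measure α}
    [NormedAddCommGroup H] [InnerProductSpace ℂ H] [CompleteSpace H] (u : unitary (H →L[ℂ] H))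
    (f : α → H →L[ℂ] H) :
    ∫ x, (u : H →L[ℂ] H) ∘L f x ∘L star (u : H →L[ℂ] H) ∂μ =
      (u : H →L[ℂ] H) ∘L (∫ x, f x ∂μ) ∘L star (u : H →L[ℂ] H) :=
  let e := (Unitary.linearIsometryEquiv u).toContinuousLinearEquiv
  (e.arrowCongr e).integral_comp_comm f

section Diagonal

variable {H ι : Type*} [NormedAddCommGroup H] [InnerProductSpace ℂ H] [CompleteSpace H]
  [Fintype ι] {b : ι → H}

lemma exp_smul_sum_smul_rankOne_apply (hb : Orthonormal ℂ b) (ε : ι → ℝ) (s : ℝ) (k : ι) :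
    NormedSpace.exp ((-(s : ℂ) * I) • ∑ j, (ε j : ℂ) • rankOne ℂ (b j) (b j)) (b k) =
      Complex.exp (-(s : ℂ) * I * ε k) • b k :=
  NormedSpace.exp_apply_of_apply_eq_smul <| by
    rw [smul_apply, hb.sum_smul_rankOne_self_apply, smul_smul]

lemma exp_smul_sum_smul_rankOne_apply_sum (hb : Orthonormal ℂ b) (ε : ι → ℝ) (s t : ℝ)
    (c : ι → ℂ) :
    NormedSpace.exp ((-(s : ℂ) * I) • ∑ j, (ε j : ℂ) • rankOne ℂ (b j) (b j))
        (∑ j, (c j * Complex.exp (-I * ε j * t)) • b j) =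
      ∑ j, (c j * Complex.exp (-I * ε j * ((t + s : ℝ) : ℂ))) • b j := by
  simp only [map_sum, map_smul, exp_smul_sum_smul_rankOne_apply hb, smul_smul]
  congr! 2 with j
  rw [mul_assoc, ← Complex.exp_add]
  push_cast
  ring_nf

end Diagonal

theorem clock_povm_covariant_and_positive_general
    {H : Type*} [NormedAddCommGroup H] [InnerProductSpace ℂ H]
    (n : ℕ) (b : OrthonormalBasis (Fin n) ℂ H)
    (tmax : ℝ) (htmax : 0 < tmax)
    (g : Fin n → ℝ)
    (ε : Fin n → ℝ)
    (ct : ℝ → H)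
    (hct : ∀ t : ℝ, ct t = ∑ j : Fin n,
      (Complex.exp (Complex.I * (g j : ℝ)) * Complex.exp (-Complex.I * (ε j : ℝ) * t)) • b j)
    (HC : H →L[ℂ] H) (hHC : HC = ∑ j : Fin n, ((ε j : ℝ) : ℂ) • ketbra (b j) (b j))
    (U : ℝ → (H →L[ℂ] H))
    (hU : ∀ t : ℝ, U t = NormedSpace.exp ((-(t : ℂ) * Complex.I) • HC))
    (E : Set ℝ → (H →L[ℂ] H))
    (hE : ∀ X : Set ℝ, E X = (1 / tmax) • ∫ t in X, ketbra (ct t) (ct t)) :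
    ∀ X : Set ℝ, MeasurableSet X → volume X < ⊤ →
      (∀ s : ℝ, (U s).comp ((E X).comp (U (-s))) = E ((fun x => x + s) '' X))
        ∧ (E X).IsPositive := by
  have : FiniteDimensional ℂ H := b.toBasis.finiteDimensional_of_finite
  have : CompleteSpace H := FiniteDimensional.complete ℂ H
  -- the exponential's unitarity and `star` lemmas are stated for normed `ℚ`-algebras
  let +nondep : NormedAlgebra ℚ (H →L[ℂ] H) := .restrictScalars ℚ ℂ _
  simp_rw [ketbra_eq_rankOne] at hHC hE
  have hskew : ∀ s : ℝ, (-(s : ℂ) * I) • HC ∈ skewAdjoint (H →L[ℂ] H) := fun s =>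
    hHC ▸ (isSelfAdjoint_sum_ofReal_smul_rankOne_self _ ε).smul_mem_skewAdjoint
      (neg_ofReal_mul_I_mem_skewAdjoint s)
  have hUstar : ∀ s, star (U s) = U (-s) := by
    intro s
    rw [hU, hU, star_exp_of_mem_skewAdjoint (hskew s), ← neg_smul]
    push_cast
    ring_nf
  have hUct : ∀ s t, U s (ct t) = ct (t + s) := by
    intro s t
    rw [hU, hct, hct, hHC]
    exact exp_smul_sum_smul_rankOne_apply_sum b.orthonormal ε s t _
  intro X _ _
  refine ⟨fun s => ?_, ?_⟩
  · let u : unitary (H →L[ℂ] H) :=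
      ⟨U s, hU s ▸ NormedSpace.exp_mem_unitary_of_mem_skewAdjoint (hskew s)⟩
    calc (U s).comp ((E X).comp (U (-s)))
        = (1 / tmax) • ∫ t in X, (u : H →L[ℂ] H) ∘L rankOne ℂ (ct t) (ct t) ∘L star (u : _) := by
          rw [integral_unitary_comp_comp_star, hE, ← hUstar, smul_comp, comp_smul]
      _ = (1 / tmax) • ∫ t in X, rankOne ℂ (ct (t + s)) (ct (t + s)) := by
          simp_rw [star_eq_adjoint, comp_rankOne_comp_adjoint]
          simp only [u, hUct]
      _ = E ((fun x => x + s) '' X) := by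
          rw [hE, (measurePreserving_add_right volume s).setIntegral_image_emb
            (measurableEmbedding_addRight s)]
  · rw [← nonneg_iff_isPositive, hE]
    exact smul_nonneg (by positivity) <|
      integral_nonneg fun t => (nonneg_iff_isPositive _).mpr (isPositive_rankOne_self _)

/-- **Covariance and positivity of the clock POVM.**  For the finite-dimensional
discrete-spectrum clock with Hamiltonian `HC = Σ_j ε_j |b j⟩⟨b j|`, evolution
`U t = exp(-i t HC)` (so `U (-s)` is the inverse of `U s`), covariant clock states
`|t⟩ = Σ_j e^{i g j} e^{-i ε_j t} b j` and effect operators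
`E X = (1/t_max) ∫_X |t⟩⟨t| dt`, one has for every measurable `X ⊆ ℝ` of finite measure
and every `s ∈ ℝ`:  `U(s) E(X) U(s)⁻¹ = E(X + s)`, and `E X` is a positive operator. -/
theorem clock_povm_covariant_and_positive
    {H : Type*} [NormedAddCommGroup H] [InnerProductSpace ℂ H] [FiniteDimensional ℂ H]
    (n : ℕ) (hn : 1 ≤ n) (b : OrthonormalBasis (Fin n) ℂ H)
    (tmax φ : ℝ) (htmax : 0 < tmax)
    (nj : Fin n → ℤ) (hnj : Function.Injective nj)
    (g : Fin n → ℝ)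
    (ε : Fin n → ℝ) (hε : ∀ j, ε j = (2 * Real.pi * (nj j : ℝ) + φ) / tmax)
    (ct : ℝ → H)
    (hct : ∀ t : ℝ, ct t = ∑ j : Fin n,
      (Complex.exp (Complex.I * (g j : ℝ)) * Complex.exp (-Complex.I * (ε j : ℝ) * t)) • b j)
    (HC : H →L[ℂ] H) (hHC : HC = ∑ j : Fin n, ((ε j : ℝ) : ℂ) • ketbra (b j) (b j))
    (U : ℝ → (H →L[ℂ] H))
    (hU : ∀ t : ℝ, U t = NormedSpace.exp ((-(t : ℂ) * Complex.I) • HC))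
    (E : Set ℝ → (H →L[ℂ] H))
    (hE : ∀ X : Set ℝ, E X = (1 / tmax) • ∫ t in X, ketbra (ct t) (ct t)) :
    ∀ X : Set ℝ, MeasurableSet X → volume X < ⊤ →
      (∀ s : ℝ, (U s).comp ((E X).comp (U (-s))) = E ((fun x => x + s) '' X))
        ∧ (E X).IsPositive :=
  clock_povm_covariant_and_positive_general n b tmax htmax g ε ct hct HC hHC U hU E hE

end
end

section
/- In the finite-dimensional discrete-spectrum clock setup, the time operator and the clock Hamiltonian form a canonically conjugate (Heisenberg) pair on the subspace D := {ψ ∈ ℋ_C : ⟨|t_max⟩, ψ⟩ = 0}: for every ψ ∈ ℋ_C with ⟨|t_max⟩, ψ⟩ = 0 one has (T̂ ∘ Ĥ_C − Ĥ_C ∘ T̂) ψ = i ψ, where |t_max⟩ = Σ_j e^{i g(j)} e^{−i ε_j t_max} e_j is the clock state at time t_max. -/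
/-!
Since `|t⟩ = e^{-i t Ĥ_C} |0⟩`, the projector `P t = |t⟩⟨t|` satisfies `P' t = i [P t, Ĥ_C]`;
integrating by parts, `t_max [T̂, Ĥ_C] = -i ∫₀^{t_max} t P' t dt = -i (t_max P t_max - ∫ P)`.
The energies differ by nonzero multiples of `2π / t_max`, so the off-diagonal part of `∫ P`
vanishes and `∫₀^{t_max} P t dt = t_max`. Hence `[T̂, Ĥ_C] = i (1 - P t_max)`, which is `i` on
the orthogonal complement of `|t_max⟩`.
-/

open MeasureTheory

noncomputable section

open Complex ComplexConjugate InnerProductSpace ContinuousLinearMap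

section Schrodinger

variable {H : Type*} [NormedAddCommGroup H] [InnerProductSpace ℂ H]

lemma ketbra_apply (v w ψ : H) : ketbra v w ψ = inner ℂ w ψ • v := rfl

lemma continuous_ketbra {X : Type*} [TopologicalSpace X] {v w : X → H}
    (hv : Continuous v) (hw : Continuous w) : Continuous fun x => ketbra (v x) (w x) :=
  (toSpanSingletonCLE.continuous.comp hv).clm_comp ((innerSL ℂ).continuous.comp hw)

variable {A : H →L[ℂ] H} {c : ℝ → H}

lemma hasDerivAt_ketbra_self_apply (hA : (A : H →ₗ[ℂ] H).IsSymmetric) {t : ℝ}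
    (hc : HasDerivAt c (-I • A (c t)) t) (ψ : H) :
    HasDerivAt (fun s => ketbra (c s) (c s) ψ)
      (I • (ketbra (c t) (c t) (A ψ) - A (ketbra (c t) (c t) ψ))) t := by
  refine ((hc.inner ℂ (hasDerivAt_const t ψ)).smul hc).congr_deriv ?_
  simp only [ketbra_apply, inner_zero_right, zero_add, inner_smul_left, map_neg, conj_I, neg_neg,
    hA.apply_clm, map_smul]
  module

theorem firstMoment_comp_sub_comp_apply [CompleteSpace H] (hA : (A : H →ₗ[ℂ] H).IsSymmetric)
    (hc : ∀ t, HasDerivAt c (-I • A (c t)) t) (τ : ℝ) (ψ : H) :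
    ((∫ t in (0:ℝ)..τ, t • ketbra (c t) (c t)).comp A
        - A.comp (∫ t in (0:ℝ)..τ, t • ketbra (c t) (c t))) ψ
      = -I • (τ • ketbra (c τ) (c τ) ψ - ∫ t in (0:ℝ)..τ, ketbra (c t) (c t) ψ) := by
  have hP : Continuous fun t => ketbra (c t) (c t) := by
    have : Continuous c := continuous_iff_continuousAt.2 fun t => (hc t).continuousAt
    exact continuous_ketbra this this
  have hPψ : ∀ v, Continuous fun t => ketbra (c t) (c t) v := fun v => hP.clm_apply continuous_const
  have hint : IntervalIntegrable (fun t : ℝ => t • ketbra (c t) (c t)) volume 0 τ :=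
    (continuous_id.smul hP).intervalIntegrable _ _
  have hint' : ∀ v, IntervalIntegrable (fun t : ℝ => t • ketbra (c t) (c t) v) volume 0 τ :=
    fun v => (continuous_id.smul (hPψ v)).intervalIntegrable _ _
  have hparts := intervalIntegral.integral_smul_deriv_eq_deriv_smul (a := 0) (b := τ)
    (u := fun t => t) (u' := fun _ => (1 : ℝ)) (fun t _ => hasDerivAt_id' t)
    (fun t _ => hasDerivAt_ketbra_self_apply hA (hc t) ψ) intervalIntegrable_const
    ((continuous_const.smul ((hPψ (A ψ)).sub (A.continuous.comp (hPψ ψ)))).intervalIntegrable _ _)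
  calc _ = (∫ t in (0:ℝ)..τ, t • ketbra (c t) (c t) (A ψ))
          - A (∫ t in (0:ℝ)..τ, t • ketbra (c t) (c t) ψ) := by
        simp [intervalIntegral_apply hint]
    _ = ∫ t in (0:ℝ)..τ, (t • ketbra (c t) (c t) (A ψ) - A (t • ketbra (c t) (c t) ψ)) := by
        rw [← A.intervalIntegral_comp_comm (hint' ψ)]
        exact (intervalIntegral.integral_sub (hint' _)
          ((A.continuous.comp (continuous_id.smul (hPψ ψ))).intervalIntegrable _ _)).symm
    _ = -I • ∫ t in (0:ℝ)..τ,
          t • (I • (ketbra (c t) (c t) (A ψ) - A (ketbra (c t) (c t) ψ))) := by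
        rw [← intervalIntegral.integral_smul]
        congr! 2 with t
        rw [map_smul_of_tower]
        match_scalars <;> ring_nf <;> simp [I_sq]
    _ = _ := by
        rw [hparts]
        simp

end Schrodinger

lemma exp_neg_I_mul_mul_eq_of_mul_eq {x τ φ : ℝ} {m : ℤ} (h : x * τ = 2 * Real.pi * m + φ) :
    exp (-I * x * τ) = exp (-I * φ) := by
  have hC : (x : ℂ) * τ = 2 * Real.pi * m + φ := by exact_mod_cast congrArg ((↑) : ℝ → ℂ) h
  rw [show -I * x * τ = (-m : ℤ) * (2 * Real.pi * I) + -I * φ by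
      push_cast; linear_combination -I * hC,
    exp_add, exp_int_mul_two_pi_mul_I, one_mul]

lemma integral_exp_mul_exp_of_periodic {ι : Type*} [DecidableEq ι] (ε : ι → ℝ) {τ : ℝ}
    (hε : Function.Injective ε)
    (hper : ∀ j k, exp (-I * ε j * τ) = exp (-I * ε k * τ)) (j k : ι) :
    ∫ t in (0:ℝ)..τ, exp (-I * ε j * t) * exp (I * ε k * t) = if j = k then (τ : ℂ) else 0 := by
  have hmul : ∀ t : ℝ, exp (-I * ε j * t) * exp (I * ε k * t) = exp ((I * (ε k - ε j)) * t) :=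
    fun t => by rw [← exp_add]; ring_nf
  simp_rw [hmul]
  split_ifs with hjk
  · simp [hjk]
  · have hω : I * ((ε k : ℂ) - ε j) ≠ 0 :=
      mul_ne_zero I_ne_zero (sub_ne_zero.2 (ofReal_injective.ne (hε.ne (Ne.symm hjk))))
    rw [integral_exp_mul_complex hω, ← hmul, hper j k, ← exp_add]
    simp

section Clock

variable {H : Type*} [NormedAddCommGroup H] [InnerProductSpace ℂ H]
  {ι : Type*} [Fintype ι] (b : OrthonormalBasis ι ℂ H) (ε : ι → ℝ)

def clockHamiltonian : H →L[ℂ] H := ∑ j, (ε j : ℂ) • ketbra (b j) (b j)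

def clockState (a : ι → ℂ) (t : ℝ) : H := ∑ j, (a j * exp (-I * ε j * t)) • b j

lemma clockHamiltonian_apply_basis (j : ι) : clockHamiltonian b ε (b j) = (ε j : ℂ) • b j := by
  classical
  simp [clockHamiltonian, ketbra_apply, orthonormal_iff_ite.mp b.orthonormal]

lemma isSymmetric_clockHamiltonian : (clockHamiltonian b ε : H →ₗ[ℂ] H).IsSymmetric := by
  simp only [clockHamiltonian, toLinearMap_sum, toLinearMap_smul]
  exact LinearMap.isSymmetric_sum _ fun j _ =>
    (isSymmetric_rankOne_self (b j)).smul (conj_ofReal (ε j))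

lemma hasDerivAt_clockState (a : ι → ℂ) (t : ℝ) :
    HasDerivAt (clockState b ε a) (-I • clockHamiltonian b ε (clockState b ε a t)) t := by
  have hexp : ∀ j, HasDerivAt (fun s : ℝ => exp (-I * ε j * s))
      (exp (-I * ε j * t) * (-I * ε j * 1)) t :=
    fun j => ((hasDerivAt_id (t : ℂ)).const_mul _).comp_ofReal.cexp
  refine (HasDerivAt.fun_sum fun j _ => ((hexp j).const_mul (a j)).smul_const (b j)).congr_deriv ?_
  simp only [clockState, map_sum, map_smul, clockHamiltonian_apply_basis, Finset.smul_sum,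
    smul_smul]
  congr! 2 with j
  ring

lemma ketbra_clockState_apply (a : ι → ℂ) (t : ℝ) (ψ : H) :
    ketbra (clockState b ε a t) (clockState b ε a t) ψ = ∑ j, ∑ k,
      (a j * conj (a k) * inner ℂ (b k) ψ * (exp (-I * ε j * t) * exp (I * ε k * t))) • b j := by
  have hconj : ∀ k, conj (exp (-I * ε k * t)) = exp (I * ε k * t) := fun k => by
    rw [← exp_conj]; simp
  simp only [ketbra_apply, clockState, sum_inner, inner_smul_left, Finset.sum_smul,
    Finset.smul_sum, smul_smul, Finset.sum_mul, map_mul, hconj]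
  congr! 3
  ring

theorem integral_ketbra_clockState_apply {τ : ℝ} (hε : Function.Injective ε)
    (hper : ∀ j k, exp (-I * ε j * τ) = exp (-I * ε k * τ)) {a : ι → ℂ} (ha : ∀ j, ‖a j‖ = 1)
    (ψ : H) :
    ∫ t in (0:ℝ)..τ, ketbra (clockState b ε a t) (clockState b ε a t) ψ = (τ : ℂ) • ψ := by
  classical
  have : FiniteDimensional ℂ H := b.toBasis.finiteDimensional_of_finite
  simp_rw [ketbra_clockState_apply]
  rw [intervalIntegral.integral_finsetSum fun j _ =>
    (by fun_prop : Continuous _).intervalIntegrable _ _]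
  calc _ = ∑ j, ∑ k, (a j * conj (a k) * inner ℂ (b k) ψ * if j = k then (τ : ℂ) else 0) • b j := by
        refine Finset.sum_congr rfl fun j _ => ?_
        rw [intervalIntegral.integral_finsetSum fun k _ =>
          (by fun_prop : Continuous _).intervalIntegrable _ _]
        simp_rw [intervalIntegral.integral_smul_const, intervalIntegral.integral_const_mul,
          integral_exp_mul_exp_of_periodic ε hε hper]
    _ = ∑ j, (τ : ℂ) • inner ℂ (b j) ψ • b j := by
        simp [mul_conj', ha, smul_smul, mul_comm]
    _ = (τ : ℂ) • ψ := by rw [← Finset.smul_sum, b.sum_repr']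

end Clock

theorem heisenberg_pair_on_subspace_general
    {H : Type*} [NormedAddCommGroup H] [InnerProductSpace ℂ H]
    (n : ℕ) (b : OrthonormalBasis (Fin n) ℂ H)
    (tmax φ : ℝ) (htmax : 0 < tmax)
    (nj : Fin n → ℤ) (hnj : Function.Injective nj)
    (g : Fin n → ℝ)
    (ε : Fin n → ℝ) (hε : ∀ j, ε j = (2 * Real.pi * (nj j : ℝ) + φ) / tmax)
    (ct : ℝ → H)
    (hct : ∀ t : ℝ, ct t = ∑ j : Fin n,
      (Complex.exp (Complex.I * (g j : ℝ)) * Complex.exp (-Complex.I * (ε j : ℝ) * t)) • b j)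
    (HC : H →L[ℂ] H) (hHC : HC = ∑ j : Fin n, ((ε j : ℝ) : ℂ) • ketbra (b j) (b j))
    (T : H →L[ℂ] H)
    (hT : T = (1 / tmax) • ∫ t in (0:ℝ)..tmax, t • ketbra (ct t) (ct t)) :
    ∀ ψ : H, (inner ℂ (ct tmax) ψ : ℂ) = 0 →
      (T.comp HC - HC.comp T) ψ = Complex.I • ψ := by
  intro ψ hψ
  have : FiniteDimensional ℂ H := b.toBasis.finiteDimensional_of_finite
  obtain rfl : ct = clockState b ε (fun j => exp (I * g j)) := funext hct
  obtain rfl : HC = clockHamiltonian b ε := hHC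
  subst hT
  have hετ : ∀ j, ε j * tmax = 2 * Real.pi * nj j + φ := fun j => by
    rw [hε, div_mul_cancel₀ _ htmax.ne']
  have hε_inj : Function.Injective ε := fun j k hjk => hnj <| by
    have := hετ j
    rw [hjk, hετ k] at this
    exact_mod_cast (mul_right_injective₀ Real.two_pi_pos.ne') (add_right_cancel this).symm
  have hper : ∀ j k, exp (-I * ε j * tmax) = exp (-I * ε k * tmax) := fun j k => by
    rw [exp_neg_I_mul_mul_eq_of_mul_eq (hετ j), exp_neg_I_mul_mul_eq_of_mul_eq (hετ k)]
  rw [smul_comp, comp_smul, ← smul_sub, smul_apply,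
    firstMoment_comp_sub_comp_apply (isSymmetric_clockHamiltonian b ε)
      (hasDerivAt_clockState b ε _),
    integral_ketbra_clockState_apply b ε hε_inj hper fun j => by
      rw [mul_comm, norm_exp_ofReal_mul_I],
    ketbra_apply, hψ, zero_smul, smul_zero, zero_sub, ← Complex.coe_smul]
  match_scalars
  field_simp [htmax.ne']

/-- **Heisenberg pair on the subspace `D = {ψ : ⟨t_max|ψ⟩ = 0}`.**  For the
finite-dimensional discrete-spectrum clock with Hamiltonian `HC = Σ_j ε_j |b j⟩⟨b j|`,
covariant clock states `|t⟩ = Σ_j e^{i g j} e^{-i ε_j t} b j`, and first-moment time operator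
`T = (1/t_max) ∫₀^{t_max} t |t⟩⟨t| dt`, for every ψ orthogonal to the clock state `|t_max⟩`
one has `[T, HC] ψ = i ψ`. -/
theorem heisenberg_pair_on_subspace
    {H : Type*} [NormedAddCommGroup H] [InnerProductSpace ℂ H] [FiniteDimensional ℂ H]
    (n : ℕ) (hn : 1 ≤ n) (b : OrthonormalBasis (Fin n) ℂ H)
    (tmax φ : ℝ) (htmax : 0 < tmax)
    (nj : Fin n → ℤ) (hnj : Function.Injective nj)
    (g : Fin n → ℝ)
    (ε : Fin n → ℝ) (hε : ∀ j, ε j = (2 * Real.pi * (nj j : ℝ) + φ) / tmax)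
    (ct : ℝ → H)
    (hct : ∀ t : ℝ, ct t = ∑ j : Fin n,
      (Complex.exp (Complex.I * (g j : ℝ)) * Complex.exp (-Complex.I * (ε j : ℝ) * t)) • b j)
    (HC : H →L[ℂ] H) (hHC : HC = ∑ j : Fin n, ((ε j : ℝ) : ℂ) • ketbra (b j) (b j))
    (T : H →L[ℂ] H)
    (hT : T = (1 / tmax) • ∫ t in (0:ℝ)..tmax, t • ketbra (ct t) (ct t)) :
    ∀ ψ : H, (inner ℂ (ct tmax) ψ : ℂ) = 0 →
      (T.comp HC - HC.comp T) ψ = Complex.I • ψ :=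
  heisenberg_pair_on_subspace_general n b tmax φ htmax nj hnj g ε hε ct hct HC hHC T hT

end
end
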